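/- Under the same hypotheses, the pseudo-inverses satisfy ||Ŵ† − W†||_op ≤ ||W†||_op · √(1 + ε̃) · ε̃/(1 − ε̃), where W† denotes the Moore–Penrose pseudoinverse and ||W†||_op = √(σ_1(A)). -/

import Mathlib

open Matrix

/-- The ℓ²→ℓ² operator norm (spectral norm) of a real rectangular matrix. -/
noncomputable def opNorm {m n : ℕ} (A : Matrix (Fin m) (Fin n) ℝ) : ℝ :=
  ‖LinearMap.toContinuousLinearMap
      (Matrix.toLin (EuclideanSpace.basisFun (Fin n) ℝ).toBasis
        (EuclideanSpace.basisFun (Fin m) ℝ).toBasis A)‖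

/-- Eigenvalues of a real matrix (junk value `0` if not symmetric). -/
noncomputable def eigVals {d : ℕ} (A : Matrix (Fin d) (Fin d) ℝ) : Fin d → ℝ :=
  if h : A.IsHermitian then h.eigenvalues else 0

/-- `sval A j` is the `(j+1)`-th largest eigenvalue of the symmetric matrix `A`;
for a positive semidefinite matrix this is the `(j+1)`-th largest singular value. -/
noncomputable def sval {d : ℕ} (A : Matrix (Fin d) (Fin d) ℝ) (j : Fin d) : ℝ :=
  (eigVals A ∘ Tuple.sort (eigVals A)) j.rev

/-- `B` is the Moore–Penrose pseudoinverse of `A` (four Penrose conditions). -/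
def IsMoorePenrose {m n : ℕ} (A : Matrix (Fin m) (Fin n) ℝ)
    (B : Matrix (Fin n) (Fin m) ℝ) : Prop :=
  A * B * A = A ∧ B * A * B = B ∧ (A * B)ᵀ = A * B ∧ (B * A)ᵀ = B * A

/-!
With `D = diag(dᵢ)`, put `M = U D^{-1/2} Uᵀ` and `N = U D^{1/2} Uᵀ`, so that `M N = N M = 1`,
`W = Ŵ M` and `Ŵ = W N`. Since `Ŵᵀ Â` is a left inverse of `Ŵ`, `W` has one too, hence
`W† W = 1`, and the Penrose conditions identify `Ŵ† = M W†`. Thus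
`Ŵ† − W† = U (D^{-1/2} − 1) Uᵀ W†` has norm at most `maxᵢ |dᵢ^{-1/2} − 1| · ‖W†‖`.
Conjugating by `U`, the `dᵢ − 1` are the diagonal entries of `Uᵀ Ŵᵀ (A − Â) Ŵ U`, so
`|dᵢ − 1| ≤ ‖Ŵ‖² ‖Â − A‖ = ε̃ σ_k(A) / σ_k(Â) ≤ ε̃ / (1 − ε̃) =: δ`, using Weyl's inequality
`σ_k(Â) ≥ σ_k(A) − ‖Â − A‖`; finally `|t − 1| ≤ 1/2` gives `|t^{-1/2} − 1| ≤ |t − 1|`, and the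
factor `√(1 + ε̃) ≥ 1` is slack.
-/

open scoped Matrix.Norms.L2Operator RealInnerProductSpace

lemma opNorm_eq_norm {m n : ℕ} (A : Matrix (Fin m) (Fin n) ℝ) : opNorm A = ‖A‖ := rfl

section OrthonormalBasis

variable {ι E : Type*} [Fintype ι] [NormedAddCommGroup E] [InnerProductSpace ℝ E]
  (b : OrthonormalBasis ι ℝ E)

lemma OrthonormalBasis.inner_eq_zero_of_mem_span {s : Finset ι} {x : E}
    (hx : x ∈ Submodule.span ℝ (Set.range fun i : s => b i)) {i : ι} (hi : i ∉ s) :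
    ⟪b i, x⟫ = 0 := by
  induction hx using Submodule.span_induction with
  | mem y hy =>
    obtain ⟨⟨j, hj⟩, rfl⟩ := hy
    exact b.orthonormal.2 fun h : i = j => hi (h ▸ hj)
  | zero => exact inner_zero_right _
  | add y z _ _ hy hz => rw [inner_add_right, hy, hz, add_zero]
  | smul a y _ hy => rw [real_inner_smul_right, hy, mul_zero]

lemma OrthonormalBasis.finrank_span_range_subtype (s : Finset ι) :
    Module.finrank ℝ (Submodule.span ℝ (Set.range fun i : s => b i)) = s.card :=
  (finrank_span_eq_card (b.orthonormal.linearIndependent.comp _ Subtype.val_injective)).trans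
    (Fintype.card_coe s)

lemma OrthonormalBasis.norm_sq_eq_sum_inner_sq (x : E) : ‖x‖ ^ 2 = ∑ i, ⟪b i, x⟫ ^ 2 := by
  rw [← real_inner_self_eq_norm_sq, ← b.sum_inner_mul_inner x x]
  simp only [real_inner_comm x, sq]

end OrthonormalBasis

section Rayleigh

variable {n : Type*} [Fintype n] [DecidableEq n] {A : Matrix n n ℝ}

lemma Matrix.IsHermitian.inner_toEuclideanCLM_self (hA : A.IsHermitian) (x : EuclideanSpace ℝ n) :
    ⟪x, toEuclideanCLM (𝕜 := ℝ) A x⟫ = ∑ i, hA.eigenvalues i * ⟪hA.eigenvectorBasis i, x⟫ ^ 2 := by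
  rw [← hA.eigenvectorBasis.sum_inner_mul_inner x]
  refine Finset.sum_congr rfl fun i _ => ?_
  have hvec : toEuclideanCLM (𝕜 := ℝ) A (hA.eigenvectorBasis i)
      = hA.eigenvalues i • hA.eigenvectorBasis i :=
    WithLp.ofLp_injective 2 (hA.mulVec_eigenvectorBasis i)
  have hsymm : ⟪toEuclideanCLM (𝕜 := ℝ) A (hA.eigenvectorBasis i), x⟫
      = ⟪hA.eigenvectorBasis i, toEuclideanCLM (𝕜 := ℝ) A x⟫ :=
    isSymmetric_toEuclideanLin_iff.mpr hA _ _
  rw [← hsymm, hvec, real_inner_smul_left, real_inner_comm x]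
  ring

lemma Matrix.IsHermitian.mul_norm_sq_le_inner_of_mem_span (hA : A.IsHermitian) {s : Finset n}
    {c : ℝ} (hc : ∀ i ∈ s, c ≤ hA.eigenvalues i) {x : EuclideanSpace ℝ n}
    (hx : x ∈ Submodule.span ℝ (Set.range fun i : s => hA.eigenvectorBasis i)) :
    c * ‖x‖ ^ 2 ≤ ⟪x, toEuclideanCLM (𝕜 := ℝ) A x⟫ := by
  rw [hA.inner_toEuclideanCLM_self, hA.eigenvectorBasis.norm_sq_eq_sum_inner_sq, Finset.mul_sum]
  refine Finset.sum_le_sum fun i _ => ?_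
  by_cases hi : i ∈ s
  · exact mul_le_mul_of_nonneg_right (hc i hi) (sq_nonneg _)
  · simp [hA.eigenvectorBasis.inner_eq_zero_of_mem_span hx hi]

lemma Matrix.IsHermitian.inner_le_mul_norm_sq_of_mem_span (hA : A.IsHermitian) {s : Finset n}
    {c : ℝ} (hc : ∀ i ∈ s, hA.eigenvalues i ≤ c) {x : EuclideanSpace ℝ n}
    (hx : x ∈ Submodule.span ℝ (Set.range fun i : s => hA.eigenvectorBasis i)) :
    ⟪x, toEuclideanCLM (𝕜 := ℝ) A x⟫ ≤ c * ‖x‖ ^ 2 := by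
  rw [hA.inner_toEuclideanCLM_self, hA.eigenvectorBasis.norm_sq_eq_sum_inner_sq, Finset.mul_sum]
  refine Finset.sum_le_sum fun i _ => ?_
  by_cases hi : i ∈ s
  · exact mul_le_mul_of_nonneg_right (hc i hi) (sq_nonneg _)
  · simp [hA.eigenvectorBasis.inner_eq_zero_of_mem_span hx hi]

end Rayleigh

lemma Matrix.inner_toEuclideanCLM_self_le {n : Type*} [Fintype n] [DecidableEq n]
    (A : Matrix n n ℝ) (x : EuclideanSpace ℝ n) :
    ⟪x, toEuclideanCLM (𝕜 := ℝ) A x⟫ ≤ ‖A‖ * ‖x‖ ^ 2 :=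
  calc ⟪x, toEuclideanCLM (𝕜 := ℝ) A x⟫ ≤ ‖x‖ * ‖toEuclideanCLM (𝕜 := ℝ) A x‖ :=
        real_inner_le_norm _ _
    _ ≤ ‖x‖ * (‖A‖ * ‖x‖) := by
        gcongr; exact (toEuclideanCLM (𝕜 := ℝ) A).le_opNorm x
    _ = ‖A‖ * ‖x‖ ^ 2 := by ring

lemma Matrix.sub_norm_sub_le_of_inner_bounds {n : Type*} [Fintype n] [DecidableEq n]
    {A B : Matrix n n ℝ} {S T : Submodule ℝ (EuclideanSpace ℝ n)}
    (hST : Fintype.card n < Module.finrank ℝ S + Module.finrank ℝ T) {a b : ℝ}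
    (hA : ∀ x ∈ S, a * ‖x‖ ^ 2 ≤ ⟪x, toEuclideanCLM (𝕜 := ℝ) A x⟫)
    (hB : ∀ x ∈ T, ⟪x, toEuclideanCLM (𝕜 := ℝ) B x⟫ ≤ b * ‖x‖ ^ 2) :
    a - ‖B - A‖ ≤ b := by
  have hpos : 0 < Module.finrank ℝ ↥(S ⊓ T) := by
    have := Submodule.finrank_sup_add_finrank_inf_eq S T
    have := (S ⊔ T).finrank_le
    rw [finrank_euclideanSpace] at this
    omega
  obtain ⟨x, hxST, hx0⟩ := Submodule.exists_mem_ne_zero_of_ne_bot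
    (Submodule.one_le_finrank_iff.mp hpos)
  have hdiff : ⟪x, toEuclideanCLM (𝕜 := ℝ) (A - B) x⟫
      = ⟪x, toEuclideanCLM (𝕜 := ℝ) A x⟫ - ⟪x, toEuclideanCLM (𝕜 := ℝ) B x⟫ := by
    rw [map_sub, _root_.sub_apply, inner_sub_right]
  have hx : 0 < ‖x‖ ^ 2 := by positivity
  have := (A - B).inner_toEuclideanCLM_self_le x
  rw [hdiff, ← norm_neg, neg_sub] at this
  nlinarith [hA x hxST.1, hB x hxST.2]

section SortedEigenvalues

variable {d : ℕ} {A : Matrix (Fin d) (Fin d) ℝ}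

lemma eigVals_eq (hA : A.IsHermitian) : eigVals A = hA.eigenvalues := dif_pos hA

lemma sval_le_eigenvalues (hA : A.IsHermitian) (j : Fin d) :
    ∀ i ∈ (Finset.Ici j.rev).image (Tuple.sort (eigVals A)), sval A j ≤ hA.eigenvalues i := by
  simp only [Finset.mem_image, Finset.mem_Ici]
  rintro _ ⟨l, hl, rfl⟩
  rw [← eigVals_eq hA]
  exact Tuple.monotone_sort _ hl

lemma eigenvalues_le_sval (hA : A.IsHermitian) (j : Fin d) :
    ∀ i ∈ (Finset.Iic j.rev).image (Tuple.sort (eigVals A)), hA.eigenvalues i ≤ sval A j := by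
  simp only [Finset.mem_image, Finset.mem_Iic]
  rintro _ ⟨l, hl, rfl⟩
  rw [← eigVals_eq hA]
  exact Tuple.monotone_sort _ hl

theorem sval_sub_norm_sub_le (hA : A.IsHermitian) {B : Matrix (Fin d) (Fin d) ℝ}
    (hB : B.IsHermitian) (j : Fin d) : sval A j - ‖B - A‖ ≤ sval B j := by
  -- Eigenvectors of `A` for the `d - j.rev` sorted eigenvalues `≥ sval A j`, and of `B` for the
  -- `j.rev + 1` sorted eigenvalues `≤ sval B j`.
  set S := Submodule.span ℝ (Set.range fun i : (Finset.Ici j.rev).image (Tuple.sort (eigVals A))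
    => hA.eigenvectorBasis i)
  set T := Submodule.span ℝ (Set.range fun i : (Finset.Iic j.rev).image (Tuple.sort (eigVals B))
    => hB.eigenvectorBasis i)
  have hST : Fintype.card (Fin d) < Module.finrank ℝ S + Module.finrank ℝ T := by
    simp only [S, T, OrthonormalBasis.finrank_span_range_subtype,
      Finset.card_image_of_injective _ (Equiv.injective _), Fin.card_Ici, Fin.card_Iic,
      Fintype.card_fin]
    omega
  exact Matrix.sub_norm_sub_le_of_inner_bounds hST
    (fun _ hx => hA.mul_norm_sq_le_inner_of_mem_span (sval_le_eigenvalues hA j) hx)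
    (fun _ hx => hB.inner_le_mul_norm_sq_of_mem_span (eigenvalues_le_sval hB j) hx)

theorem sval_pos_of_lt_rank (hA : A.PosSemidef) {j : Fin d} (hj : (j : ℕ) < A.rank) :
    0 < sval A j := by
  set f := eigVals A
  set π := Tuple.sort f
  have hf : ∀ i, 0 ≤ f i := by
    rw [show f = _ from eigVals_eq hA.1]; exact hA.eigenvalues_nonneg
  by_contra! hle
  have hzero : ∀ i ≤ j.rev, f (π i) = 0 := fun i hi =>
    le_antisymm ((Tuple.monotone_sort f hi).trans hle) (hf _)
  have hcard : A.rank ≤ (Finset.Ioi j.rev).card := by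
    rw [hA.1.rank_eq_card_non_zero_eigs, ← eigVals_eq hA.1,
      ← Fintype.card_congr (π.subtypeEquiv fun _ => Iff.rfl), Fintype.card_subtype]
    refine Finset.card_le_card fun i hi => ?_
    simp only [Finset.mem_filter, Finset.mem_univ, true_and] at hi
    exact Finset.mem_Ioi.mpr (lt_of_not_ge fun h => hi (hzero i h))
  rw [Fin.card_Ioi, Fin.val_rev] at hcard
  omega

end SortedEigenvalues

namespace IsMoorePenrose

variable {m n : ℕ} {A : Matrix (Fin m) (Fin n) ℝ} {B C : Matrix (Fin n) (Fin m) ℝ}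

theorem unique (hB : IsMoorePenrose A B) (hC : IsMoorePenrose A C) : B = C := by
  obtain ⟨hB1, hB2, hB3, hB4⟩ := hB
  obtain ⟨hC1, hC2, hC3, hC4⟩ := hC
  have hAB : A * B = A * C :=
    calc A * B = (A * C)ᵀ * (A * B)ᵀ := by rw [hC3, hB3, ← Matrix.mul_assoc, hC1]
      _ = A * C := by rw [← transpose_mul, ← Matrix.mul_assoc, hB1, hC3]
  have hBA : B * A = C * A :=
    calc B * A = (B * A)ᵀ * (C * A)ᵀ := by
          rw [hB4, hC4, ← Matrix.mul_assoc, Matrix.mul_assoc B, Matrix.mul_assoc B, hC1]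
      _ = C * A := by
          rw [← transpose_mul, ← Matrix.mul_assoc, Matrix.mul_assoc C, Matrix.mul_assoc C, hB1,
            hC4]
  calc B = B * (A * B) := by rw [← Matrix.mul_assoc, hB2]
    _ = C * A * C := by rw [hAB, ← Matrix.mul_assoc, hBA]
    _ = C := hC2

theorem mul_self_eq_one_of_mul_eq_one (h : IsMoorePenrose A B) {L : Matrix (Fin n) (Fin m) ℝ}
    (hL : L * A = 1) : B * A = 1 := by
  have := congrArg (L * ·) h.1
  simpa only [← Matrix.mul_assoc, hL, Matrix.one_mul] using this

theorem mul_invertible (h : IsMoorePenrose A B) (hBA : B * A = 1)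
    {M N : Matrix (Fin n) (Fin n) ℝ} (hMN : M * N = 1) (hNM : N * M = 1) :
    IsMoorePenrose (A * N) (M * B) := by
  have hinv : M * B * (A * N) = 1 := by
    rw [Matrix.mul_assoc, ← Matrix.mul_assoc B, hBA, Matrix.one_mul, hMN]
  have hproj : A * N * (M * B) = A * B := by
    rw [Matrix.mul_assoc, ← Matrix.mul_assoc N, hNM, Matrix.one_mul]
  refine ⟨?_, ?_, ?_, ?_⟩
  · rw [Matrix.mul_assoc, hinv, Matrix.mul_one]
  · rw [hinv, Matrix.one_mul]
  · rw [hproj]; exact h.2.2.1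
  · rw [hinv, transpose_one]

end IsMoorePenrose

section OrthogonalConjugation

variable {ι : Type*} [Fintype ι] [DecidableEq ι] {U : Matrix ι ι ℝ}

lemma conj_diagonal_mul_conj_diagonal (hU : Uᵀ * U = 1) (a b : ι → ℝ) :
    U * diagonal a * Uᵀ * (U * diagonal b * Uᵀ) = U * diagonal (a * b) * Uᵀ := by
  rw [Matrix.mul_assoc, ← Matrix.mul_assoc Uᵀ, ← Matrix.mul_assoc Uᵀ, hU, Matrix.one_mul,
    ← Matrix.mul_assoc, Matrix.mul_assoc U, diagonal_mul_diagonal]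
  rfl

lemma conj_diagonal_sub_one (hU : Uᵀ * U = 1) (a : ι → ℝ) :
    U * diagonal a * Uᵀ - 1 = U * diagonal (a - 1) * Uᵀ := by
  rw [show diagonal (a - 1) = diagonal a - 1 by rw [← diagonal_one, diagonal_sub]; rfl,
    Matrix.mul_sub, Matrix.sub_mul, Matrix.mul_one,
    mul_eq_one_comm.mp hU]

lemma norm_conj_of_transpose_mul_self_eq_one (hU : Uᵀ * U = 1) (X : Matrix ι ι ℝ) :
    ‖U * X * Uᵀ‖ = ‖X‖ := by
  have hstar : star U = Uᵀ := U.conjTranspose_eq_transpose_of_trivial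
  have hU' : U ∈ unitary (Matrix ι ι ℝ) :=
    Unitary.mem_iff.mpr ⟨hstar ▸ hU, hstar ▸ mul_eq_one_comm.mp hU⟩
  rw [← hstar, CStarRing.norm_mul_mem_unitary _ (Unitary.star_mem hU'),
    CStarRing.norm_mem_unitary_mul _ hU']

lemma norm_conj_diagonal_mul_le {m : Type*} [Fintype m] [DecidableEq m] (hU : Uᵀ * U = 1)
    {v : ι → ℝ} {c : ℝ} (hc₀ : 0 ≤ c) (hc : ∀ i, |v i| ≤ c) (X : Matrix ι m ℝ) :
    ‖U * diagonal v * Uᵀ * X‖ ≤ c * ‖X‖ :=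
  calc ‖U * diagonal v * Uᵀ * X‖ ≤ ‖U * diagonal v * Uᵀ‖ * ‖X‖ := l2_opNorm_mul _ _
    _ ≤ c * ‖X‖ := by
        rw [norm_conj_of_transpose_mul_self_eq_one hU, l2_opNorm_diagonal]
        gcongr
        exact (pi_norm_le_iff_of_nonneg hc₀).mpr fun i => (Real.norm_eq_abs _).trans_le (hc i)

end OrthogonalConjugation

lemma abs_inv_sqrt_sub_one_le {t : ℝ} (ht : |t - 1| ≤ 1 / 2) : |(√t)⁻¹ - 1| ≤ |t - 1| := by
  have ht₀ : 1 / 2 ≤ t := by linarith [(abs_le.mp ht).1]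
  have hs : 0 < √t := Real.sqrt_pos.mpr (by linarith)
  have hsq : √t ^ 2 = t := Real.sq_sqrt (by linarith)
  have hs₁ : 1 / 2 ≤ √t := by nlinarith
  have hfactor : (√t)⁻¹ - 1 = (1 - t) / (√t * (1 + √t)) := by
    field_simp
    linear_combination -hsq
  rw [hfactor, abs_div, abs_sub_comm, abs_of_pos (by positivity : 0 < √t * (1 + √t))]
  exact div_le_self (abs_nonneg _) (by nlinarith)

section Whitening

variable {d k : ℕ} {A Ahat : Matrix (Fin d) (Fin d) ℝ} {What : Matrix (Fin d) (Fin k) ℝ}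
  {U : Matrix (Fin k) (Fin k) ℝ} {dvec : Fin k → ℝ}

lemma abs_sub_one_le_of_whitening (hwhiten : Whatᵀ * Ahat * What = 1) (hU : Uᵀ * U = 1)
    (hdecomp : Whatᵀ * A * What = U * diagonal dvec * Uᵀ) (i : Fin k) :
    |dvec i - 1| ≤ ‖What‖ ^ 2 * ‖Ahat - A‖ := by
  have hconj : U * diagonal (dvec - 1) * Uᵀ = Whatᵀ * (A - Ahat) * What := by
    rw [← conj_diagonal_sub_one hU, ← hdecomp, ← hwhiten, Matrix.mul_sub, Matrix.sub_mul]
  calc |dvec i - 1| ≤ ‖diagonal (dvec - 1)‖ := by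
        rw [l2_opNorm_diagonal]; exact norm_le_pi_norm (dvec - 1) i
    _ = ‖Whatᵀ * (A - Ahat) * What‖ := by rw [← hconj, norm_conj_of_transpose_mul_self_eq_one hU]
    _ ≤ ‖Whatᵀ‖ * ‖A - Ahat‖ * ‖What‖ :=
        (l2_opNorm_mul _ _).trans (mul_le_mul_of_nonneg_right (l2_opNorm_mul _ _) (norm_nonneg _))
    _ = ‖What‖ ^ 2 * ‖Ahat - A‖ := by
        rw [← What.conjTranspose_eq_transpose_of_trivial, l2_opNorm_conjTranspose,
          norm_sub_rev A]
        ring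

lemma pinv_sub_pinv_eq {W : Matrix (Fin d) (Fin k) ℝ} {L : Matrix (Fin k) (Fin d) ℝ}
    (hpos : ∀ i, 0 < dvec i) (hL : L * What = 1) (hU : Uᵀ * U = 1)
    (hW : W = What * U * diagonal (fun i => (√(dvec i))⁻¹) * Uᵀ)
    {Wdag Whatdag : Matrix (Fin k) (Fin d) ℝ} (hWdag : IsMoorePenrose W Wdag)
    (hWhatdag : IsMoorePenrose What Whatdag) :
    Whatdag - Wdag = U * diagonal ((fun i => (√(dvec i))⁻¹) - 1) * Uᵀ * Wdag := by
  set M := U * diagonal (fun i => (√(dvec i))⁻¹) * Uᵀ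
  set N := U * diagonal (fun i => √(dvec i)) * Uᵀ
  have hsqrt : ∀ i, √(dvec i) ≠ 0 := fun i => (Real.sqrt_pos.mpr (hpos i)).ne'
  have hMN : M * N = 1 := by
    rw [conj_diagonal_mul_conj_diagonal hU,
      show (fun i => (√(dvec i))⁻¹) * (fun i => √(dvec i)) = fun _ => 1 from
        funext fun i => inv_mul_cancel₀ (hsqrt i),
      diagonal_one, Matrix.mul_one, mul_eq_one_comm.mp hU]
  have hNM : N * M = 1 := mul_eq_one_comm.mp hMN
  have hWM : W = What * M := by rw [hW]; simp only [M, Matrix.mul_assoc]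
  have hWhat : What = W * N := by rw [hWM, Matrix.mul_assoc, hMN, Matrix.mul_one]
  have hWdagW : Wdag * W = 1 := hWdag.mul_self_eq_one_of_mul_eq_one (L := N * L) (by
    rw [hWM, Matrix.mul_assoc, ← Matrix.mul_assoc L, hL, Matrix.one_mul, hNM])
  have hWhatdag' : Whatdag = M * Wdag :=
    hWhatdag.unique (hWhat ▸ hWdag.mul_invertible hWdagW hMN hNM)
  rw [hWhatdag', ← conj_diagonal_sub_one hU, Matrix.sub_mul, Matrix.one_mul]

end Whitening

/-- Under the hypotheses of the whitening perturbation lemma, the Moore–Penrose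
pseudoinverses of the whitening matrices satisfy
`‖Ŵ† − W†‖_op ≤ ‖W†‖_op · √(1 + ε̃) · ε̃/(1 − ε̃)`. -/
theorem unwhitening_perturbation {d k : ℕ} (hk : 0 < k) (hkd : k ≤ d)
    (A Ahat : Matrix (Fin d) (Fin d) ℝ) (What : Matrix (Fin d) (Fin k) ℝ)
    (U : Matrix (Fin k) (Fin k) ℝ) (dvec : Fin k → ℝ)
    (hA : A.PosSemidef) (hrank : A.rank = k) (hAhat : Ahat.PosSemidef)
    (σk εt : ℝ)
    (hσk : σk = sval A ⟨k - 1, by omega⟩)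
    (hεt : εt = opNorm (Ahat - A) / σk)
    (hεlt : εt < 1 / 3)
    (hwhiten : Whatᵀ * Ahat * What = 1)
    (hWnorm : opNorm What = (Real.sqrt (sval Ahat ⟨k - 1, by omega⟩))⁻¹)
    (hU : Uᵀ * U = 1)
    (hdecomp : Whatᵀ * A * What = U * Matrix.diagonal dvec * Uᵀ)
    (W : Matrix (Fin d) (Fin k) ℝ)
    (hW : W = What * U * Matrix.diagonal (fun i => (Real.sqrt (dvec i))⁻¹) * Uᵀ)
    (Wdag Whatdag : Matrix (Fin k) (Fin d) ℝ)
    (hWdag : IsMoorePenrose W Wdag)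
    (hWhatdag : IsMoorePenrose What Whatdag) :
    opNorm (Whatdag - Wdag)
      ≤ opNorm Wdag * Real.sqrt (1 + εt) * (εt / (1 - εt)) := by
  set σh := sval Ahat ⟨k - 1, by omega⟩
  have hσk_pos : 0 < σk := hσk ▸ sval_pos_of_lt_rank hA (by show k - 1 < A.rank; omega)
  have hE : ‖Ahat - A‖ = εt * σk := by rw [hεt, opNorm_eq_norm]; field_simp
  have hεt₀ : 0 ≤ εt := hεt ▸ div_nonneg (norm_nonneg _) hσk_pos.le
  have hweyl : (1 - εt) * σk ≤ σh := by
    linarith [hE ▸ hσk ▸ sval_sub_norm_sub_le hA.1 hAhat.1 ⟨k - 1, by omega⟩]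
  have hWhat : ‖What‖ ^ 2 = σh⁻¹ := by
    rw [← opNorm_eq_norm, hWnorm, inv_pow, Real.sq_sqrt (by nlinarith)]
  set δ := εt / (1 - εt)
  have hδ₀ : 0 ≤ δ := div_nonneg hεt₀ (by linarith)
  have hδ : δ ≤ 1 / 2 := by rw [div_le_iff₀ (by linarith)]; linarith
  have hd : ∀ i, |dvec i - 1| ≤ δ := fun i =>
    calc |dvec i - 1| ≤ σh⁻¹ * (εt * σk) := by
          rw [← hWhat, ← hE]; exact abs_sub_one_le_of_whitening hwhiten hU hdecomp i
      _ ≤ ((1 - εt) * σk)⁻¹ * (εt * σk) := by gcongr; exact mul_pos (by linarith) hσk_pos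
      _ = δ := by field_simp; rfl
  rw [opNorm_eq_norm, opNorm_eq_norm, pinv_sub_pinv_eq (fun i => by linarith [(abs_le.mp (hd i)).1])
    (L := Whatᵀ * Ahat) hwhiten hU hW hWdag hWhatdag]
  calc _ ≤ δ * ‖Wdag‖ := norm_conj_diagonal_mul_le hU hδ₀
        (fun i => (abs_inv_sqrt_sub_one_le ((hd i).trans hδ)).trans (hd i)) Wdag
    _ ≤ ‖Wdag‖ * √(1 + εt) * δ := by
        rw [mul_comm δ]
        refine mul_le_mul_of_nonneg_right (le_mul_of_one_le_right (norm_nonneg _) ?_) hδ₀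
        exact Real.one_le_sqrt.mpr (by linarith)
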